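/- arXiv:1505.03270 — 8 statements merged into one kernel-verified Lean document; each statement's English description precedes it below -/
import Mathlib

section
/- Let G be a group with identity e, K a loop with identity ε, and for each σ ∈ K let ψ_σ : G → G be a bijection with ψ_σ(e) = e, and ψ_ε = Id. Then the multiplication (α,a)∘(β,b) = (αβ, ψ_β(a)·b) on K×G defines a loop with identity element (ε,e), and the subgroup Ḡ = {(ε,a) : a ∈ G} is right nuclear, i.e. Ḡ is contained in the right nucleus of this loop. -/
universe u v

/-- A loop: a type with a multiplication all of whose left and right translations
are bijective, together with a two-sided identity element. -/
class MLoop (L : Type u) extends Mul L, One L where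
  mul_left_bij : ∀ x : L, Function.Bijective fun y : L => x * y
  mul_right_bij : ∀ x : L, Function.Bijective fun y : L => y * x
  one_mul : ∀ x : L, 1 * x = x
  mul_one : ∀ x : L, x * 1 = x

instance (L : Type u) [MLoop L] : Nonempty L := ⟨1⟩

/-- Left division `x \ y = λ_x⁻¹ y`. -/
noncomputable def MLoop.ldiv {L : Type u} [MLoop L] (x y : L) : L :=
  Function.invFun (fun z : L => x * z) y

/-- Right division `x / y = ρ_y⁻¹ x`. -/
noncomputable def MLoop.rdiv {L : Type u} [MLoop L] (x y : L) : L :=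
  Function.invFun (fun z : L => z * y) x

/-- Middle inner mapping `T_x = ρ_x⁻¹ ∘ λ_x`, i.e. `T_x t` is the unique `z` with
`z * x = x * t`. -/
noncomputable def MLoop.midInner {L : Type u} [MLoop L] (x t : L) : L :=
  Function.invFun (fun z : L => z * x) (x * t)

/-- The left nucleus of a multiplicative structure. -/
def leftNucleus (L : Type u) [Mul L] : Set L :=
  {u : L | ∀ x y : L, u * x * y = u * (x * y)}

/-- The right nucleus of a multiplicative structure. -/
def rightNucleus (L : Type u) [Mul L] : Set L :=
  {u : L | ∀ x y : L, x * y * u = x * (y * u)}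

/-- The middle nucleus of a multiplicative structure. -/
def middleNucleus (L : Type u) [Mul L] : Set L :=
  {u : L | ∀ x y : L, x * u * y = x * (u * y)}

/-- A subset of a loop is a normal subloop if it is the kernel of a loop homomorphism. -/
def IsNormalSubloop {L : Type u} [MLoop L] (N : Set L) : Prop :=
  ∃ (M : Type u) (i : MLoop M) (f : L → M),
    (∀ x y : L, f (x * y) = i.toMul.mul (f x) (f y)) ∧ N = {x : L | f x = i.toOne.one}

/-- The data `(Θ, f)` of a Schreier extension of the group `G` by the loop `K`. -/
structure SchreierData (K : Type u) (G : Type v) [MLoop K] [Group G] where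
  Θ : K → G ≃* G
  f : K → K → G
  theta_one : Θ 1 = MulEquiv.refl G
  f_one_left : ∀ σ : K, f 1 σ = 1
  f_one_right : ∀ σ : K, f σ 1 = 1

/-- The multiplication of the Schreier loop `L(Θ,f)` on `K × G`:
`(τ,t)∘(σ,s) = (τσ, f(τ,σ)·Θ_σ(t)·s)`. -/
def SchreierData.mul {K : Type u} {G : Type v} [MLoop K] [Group G]
    (D : SchreierData K G) (p q : K × G) : K × G :=
  (p.1 * q.1, D.f p.1 q.1 * D.Θ q.1 p.2 * q.2)

def twistedMul {K G : Type*} [Mul K] [Mul G] (ψ : K → G → G) (p q : K × G) : K × G :=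
  (p.1 * q.1, ψ q.1 p.2 * q.2)

section TwistedMul

variable {K G : Type*} [MLoop K] [Group G] (ψ : K → G → G)

theorem twistedMul_one_left (hone : ∀ σ : K, ψ σ 1 = 1) (p : K × G) :
    twistedMul ψ (1, 1) p = p := by
  simp only [twistedMul, MLoop.one_mul, hone, one_mul]

theorem twistedMul_one_right (hid : ψ 1 = id) (p : K × G) : twistedMul ψ p (1, 1) = p := by
  simp only [twistedMul, MLoop.mul_one, hid, id, mul_one]

/-- Left translation by `p` is the shear `(β, b) ↦ (p.1 β, ψ_β(p.2) b)`. -/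
theorem twistedMul_left_bijective (p : K × G) : Function.Bijective (twistedMul ψ p) :=
  (Equiv.prodShear (Equiv.ofBijective _ (MLoop.mul_left_bij p.1))
    fun β => Equiv.mulLeft (ψ β p.2)).bijective

theorem twistedMul_right_bijective (p : K × G) (hψ : Function.Bijective (ψ p.1)) :
    Function.Bijective fun q => twistedMul ψ q p :=
  (MLoop.mul_right_bij p.1).prodMap ((Group.mulRight_bijective p.2).comp hψ)

theorem twistedMul_assoc_one_fst (hid : ψ 1 = id) (a : G) (x y : K × G) :
    twistedMul ψ (twistedMul ψ x y) (1, a) = twistedMul ψ x (twistedMul ψ y (1, a)) := by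
  simp only [twistedMul, MLoop.mul_one, hid, id, mul_assoc]

end TwistedMul

/-- the multiplication `(α,a)∘(β,b) = (αβ, ψ_β(a)·b)` on `K × G` defines a
loop with identity `(ε,e)`, and `Ḡ = {(ε,a) : a ∈ G}` is right nuclear. -/
theorem schreier_stmt0 {K G : Type u} [MLoop K] [Group G]
    (ψ : K → G → G)
    (hbij : ∀ σ : K, Function.Bijective (ψ σ))
    (hone : ∀ σ : K, ψ σ 1 = 1)
    (hid : ψ 1 = id) :
    let m : K × G → K × G → K × G := fun p q => (p.1 * q.1, ψ q.1 p.2 * q.2)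
    (∀ p : K × G, m ((1 : K), (1 : G)) p = p) ∧
    (∀ p : K × G, m p ((1 : K), (1 : G)) = p) ∧
    (∀ p : K × G, Function.Bijective (m p)) ∧
    (∀ p : K × G, Function.Bijective fun q : K × G => m q p) ∧
    (∀ a : G, ∀ x y : K × G, m (m x y) ((1 : K), a) = m x (m y ((1 : K), a))) :=
  ⟨twistedMul_one_left ψ hone, twistedMul_one_right ψ hid, twistedMul_left_bijective ψ,
    fun p => twistedMul_right_bijective ψ p (hbij p.1), twistedMul_assoc_one_fst ψ hid⟩
end

section
/- Let G be a group with identity e, K a loop with identity ε, Θ : K → Aut(G) a map with Θ_ε = Id, and f : K×K → G a function with f(ε,σ) = f(σ,ε) = e for all σ ∈ K. Then the multiplication (τ,t)∘(σ,s) = (τσ, f(τ,σ)·Θ_σ(t)·s), together with the divisions (ρ,r)/(σ,s) = (ρ/σ, Θ_σ^{-1}(f(ρ/σ,σ)^{-1}·r·s^{-1})) and (σ,s)\(ρ,r) = (σ\ρ, Θ_{σ\ρ}^{-1}(s)·f(σ,σ\ρ)^{-1}·r), defines a loop L(Θ,f) on K×G with identity (ε,e); moreover Ḡ = {(ε,t)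 : t ∈ G} is a normal subgroup of L(Θ,f), the map (ε,t) ↦ t : Ḡ → G is a group isomorphism, and the map τ ↦ (τ,e)Ḡ : K → L(Θ,f)/Ḡ is a loop isomorphism. -/
universe u v

/-!
The first coordinate of `(τ,t)∘(σ,s)` is `τσ`, so the projection `L(Θ,f) → K` is a loop
homomorphism with kernel `Ḡ`, and every left coset `aḠ` is exactly the fibre over `a.1`
(because `Θ_ε = Id` and `f(σ,ε) = e`). The division formulas are checked coordinatewise:
on `K` they are the divisions of `K`, on `G` a cancellation in the group.
-/

namespace MLoop

variable {L : Type u} [MLoop L]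

theorem mul_ldiv (x y : L) : x * ldiv x y = y :=
  Function.rightInverse_invFun (mul_left_bij x).2 y

theorem ldiv_mul (x y : L) : ldiv x (x * y) = y :=
  Function.leftInverse_invFun (mul_left_bij x).1 y

theorem rdiv_mul (x y : L) : rdiv x y * y = x :=
  Function.rightInverse_invFun (mul_right_bij y).2 x

theorem mul_rdiv (x y : L) : rdiv (x * y) y = x :=
  Function.leftInverse_invFun (mul_right_bij y).1 x

end MLoop

namespace SchreierData

variable {K : Type u} {G : Type v} [MLoop K] [Group G] (D : SchreierData K G)

noncomputable def ldiv (a b : K × G) : K × G :=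
  (MLoop.ldiv a.1 b.1,
    (D.Θ (MLoop.ldiv a.1 b.1) a.2)⁻¹ * (D.f a.1 (MLoop.ldiv a.1 b.1))⁻¹ * b.2)

noncomputable def rdiv (a b : K × G) : K × G :=
  (MLoop.rdiv a.1 b.1, (D.Θ b.1).symm ((D.f (MLoop.rdiv a.1 b.1) b.1)⁻¹ * a.2 * b.2⁻¹))

/-- The left coset `a Ḡ`, where `Ḡ = {(ε,t) : t ∈ G}`. -/
def coset (a : K × G) : Set (K × G) :=
  {q | ∃ t : G, q = D.mul a (1, t)}

theorem one_mul (p : K × G) : D.mul (1, 1) p = p := by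
  simp [SchreierData.mul, MLoop.one_mul, D.f_one_left]

theorem mul_one (p : K × G) : D.mul p (1, 1) = p := by
  simp [SchreierData.mul, MLoop.mul_one, D.f_one_right, D.theta_one]

theorem mul_ldiv (a b : K × G) : D.mul a (D.ldiv a b) = b :=
  Prod.ext (MLoop.mul_ldiv a.1 b.1) (by simp only [SchreierData.mul, ldiv]; group)

theorem ldiv_mul (a b : K × G) : D.ldiv a (D.mul a b) = b :=
  Prod.ext (MLoop.ldiv_mul a.1 b.1) (by simp only [SchreierData.mul, ldiv, MLoop.ldiv_mul]; group)

theorem rdiv_mul (a b : K × G) : D.mul (D.rdiv a b) b = a :=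
  Prod.ext (MLoop.rdiv_mul a.1 b.1)
    (by simp only [SchreierData.mul, rdiv, MulEquiv.apply_symm_apply]; group)

theorem mul_rdiv (a b : K × G) : D.rdiv (D.mul a b) b = a :=
  Prod.ext (MLoop.mul_rdiv a.1 b.1) (by
    simp only [SchreierData.mul, rdiv, MLoop.mul_rdiv]
    rw [MulEquiv.symm_apply_eq]
    group)

theorem mk_one_mul_mk_one (t s : G) : D.mul (1, t) (1, s) = (1, t * s) := by
  simp [SchreierData.mul, MLoop.one_mul, D.f_one_left, D.theta_one]

theorem coset_eq (a : K × G) : D.coset a = {q | q.1 = a.1} := by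
  ext q
  refine ⟨?_, fun hq => ⟨a.2⁻¹ * q.2, ?_⟩⟩
  · rintro ⟨t, rfl⟩
    exact MLoop.mul_one a.1
  · exact Prod.ext (hq.trans (MLoop.mul_one a.1).symm)
      (by simp [SchreierData.mul, D.f_one_right, D.theta_one])

end SchreierData

/-- the multiplication `(τ,t)∘(σ,s) = (τσ, f(τ,σ)·Θ_σ(t)·s)` together with
the stated left and right divisions defines a loop `L(Θ,f)` on `K × G` with identity
`(ε,e)`; `Ḡ = {(ε,t) : t ∈ G}` is a normal subgroup (it is the kernel of the surjective
loop homomorphism onto `K`), the map `(ε,t) ↦ t : Ḡ → G` is a group isomorphism, and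
`τ ↦ (τ,e)Ḡ` is a loop isomorphism of `K` onto the factor loop `L(Θ,f)/Ḡ` (it is a
bijection onto the set of left cosets of `Ḡ` which carries the product of representatives
to the corresponding coset). -/
theorem schreier_stmt3 {K G : Type u} [MLoop K] [Group G]
    (Θ : K → G ≃* G) (hΘ : Θ 1 = MulEquiv.refl G)
    (f : K → K → G) (hf1 : ∀ σ : K, f 1 σ = 1) (hf2 : ∀ σ : K, f σ 1 = 1) :
    let m : K × G → K × G → K × G :=
      fun p q => (p.1 * q.1, f p.1 q.1 * Θ q.1 p.2 * q.2)
    let ld : K × G → K × G → K × G := fun a b =>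
      (MLoop.ldiv a.1 b.1,
        (Θ (MLoop.ldiv a.1 b.1) a.2)⁻¹ * (f a.1 (MLoop.ldiv a.1 b.1))⁻¹ * b.2)
    let rd : K × G → K × G → K × G := fun a b =>
      (MLoop.rdiv a.1 b.1,
        (Θ b.1).symm ((f (MLoop.rdiv a.1 b.1) b.1)⁻¹ * a.2 * b.2⁻¹))
    let cosetOf : K × G → Set (K × G) := fun a => {q | ∃ t : G, q = m a ((1 : K), t)}
    -- `(ε,e)` is a two-sided identity
    (∀ p : K × G, m ((1 : K), (1 : G)) p = p) ∧
    (∀ p : K × G, m p ((1 : K), (1 : G)) = p) ∧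
    -- the divisions invert the translations, so the structure is a loop
    (∀ a b : K × G, m a (ld a b) = b) ∧
    (∀ a b : K × G, ld a (m a b) = b) ∧
    (∀ a b : K × G, m (rd a b) b = a) ∧
    (∀ a b : K × G, rd (m a b) b = a) ∧
    -- `Ḡ` is a normal subloop: the kernel of a surjective loop homomorphism onto `K`
    (∃ g : K × G → K, (∀ p q : K × G, g (m p q) = g p * g q) ∧ Function.Surjective g ∧
      {p : K × G | g p = 1} = {p : K × G | ∃ t : G, p = ((1 : K), t)}) ∧
    -- `(ε,t) ↦ t : Ḡ → G` is a group isomorphism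
    (∀ t s : G, m ((1 : K), t) ((1 : K), s) = ((1 : K), t * s)) ∧
    -- `τ ↦ (τ,e)Ḡ : K → L(Θ,f)/Ḡ` is a loop isomorphism
    Function.Injective (fun τ : K => cosetOf (τ, (1 : G))) ∧
    (∀ a : K × G, ∃ τ : K, cosetOf a = cosetOf (τ, (1 : G))) ∧
    (∀ σ τ : K, cosetOf (m (σ, (1 : G)) (τ, (1 : G))) = cosetOf (σ * τ, (1 : G))) := by
  intro m ld rd cosetOf
  let D : SchreierData K G := ⟨Θ, f, hΘ, hf1, hf2⟩
  have hcoset (a : K × G) : cosetOf a = {q | q.1 = a.1} := D.coset_eq a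
  refine ⟨D.one_mul, D.mul_one, D.mul_ldiv, D.ldiv_mul, D.rdiv_mul, D.mul_rdiv,
    ⟨Prod.fst, fun _ _ => rfl, fun τ => ⟨(τ, 1), rfl⟩, ?_⟩, D.mk_one_mul_mk_one,
    ?_, ?_, ?_⟩
  · ext p
    exact ⟨fun h => ⟨p.2, Prod.ext h rfl⟩, by rintro ⟨t, rfl⟩; rfl⟩
  · intro σ τ h
    simpa [hcoset] using congrArg (((σ, (1 : G)) : K × G) ∈ ·) h
  · exact fun a => ⟨a.1, by rw [hcoset, hcoset]⟩
  · intro σ τ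
    rw [hcoset, hcoset]
end

section
/- For any Schreier loop L(Θ,f) defined on K×G, the normal subgroup Ḡ = {(ε,t) : t ∈ G} is middle and right nuclear, i.e. Ḡ is contained in both the middle nucleus and the right nucleus of L(Θ,f). -/
universe u v

/-! Because `f(σ,ε) = f(ε,σ) = e` and `Θ_ε = Id`, multiplying by `(ε,t)` only multiplies the
`G`-coordinate, by `t` on the right or by `Θ_σ(t)` on the left. Both nuclear identities then reduce
to associativity in `G` and multiplicativity of `Θ_σ`. -/

namespace SchreierData

variable {K : Type u} {G : Type v} [MLoop K] [Group G] (D : SchreierData K G)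

theorem mul_mk_one (x : K × G) (t : G) : D.mul x (1, t) = (x.1, x.2 * t) := by
  simp [SchreierData.mul, MLoop.mul_one, D.f_one_right, D.theta_one]

theorem mk_one_mul (t : G) (y : K × G) : D.mul (1, t) y = (y.1, D.Θ y.1 t * y.2) := by
  simp [SchreierData.mul, MLoop.one_mul, D.f_one_left]

/-- The Schreier loop `L(Θ,f)`: the carrier `K × G` equipped with `D.mul`. -/
def Carrier (_ : SchreierData K G) : Type (max u v) := K × G

instance : Mul D.Carrier := ⟨D.mul⟩

theorem mk_one_mem_middleNucleus (t : G) : ((1, t) : K × G) ∈ middleNucleus D.Carrier := by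
  intro (x : K × G) (y : K × G)
  change D.mul (D.mul x (1, t)) y = D.mul x (D.mul (1, t) y)
  rw [mul_mk_one, mk_one_mul]
  simp only [SchreierData.mul, map_mul, mul_assoc]

theorem mk_one_mem_rightNucleus (t : G) : ((1, t) : K × G) ∈ rightNucleus D.Carrier := by
  intro (x : K × G) (y : K × G)
  change D.mul (D.mul x y) (1, t) = D.mul x (D.mul y (1, t))
  rw [mul_mk_one, mul_mk_one]
  simp only [SchreierData.mul, mul_assoc]

end SchreierData

/-- in any Schreier loop `L(Θ,f)` on `K × G`, the subgroup
`Ḡ = {(ε,t) : t ∈ G}` is middle and right nuclear. -/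
theorem schreier_stmt4 {K G : Type u} [MLoop K] [Group G]
    (Θ : K → G ≃* G) (hΘ : Θ 1 = MulEquiv.refl G)
    (f : K → K → G) (hf1 : ∀ σ : K, f 1 σ = 1) (hf2 : ∀ σ : K, f σ 1 = 1) :
    let m : K × G → K × G → K × G :=
      fun p q => (p.1 * q.1, f p.1 q.1 * Θ q.1 p.2 * q.2)
    ∀ t : G,
      (∀ x y : K × G, m (m x ((1 : K), t)) y = m x (m ((1 : K), t) y)) ∧
      (∀ x y : K × G, m (m x y) ((1 : K), t) = m x (m y ((1 : K), t))) := by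
  intro _ t
  let D : SchreierData K G := ⟨Θ, f, hΘ, hf1, hf2⟩
  exact ⟨D.mk_one_mem_middleNucleus t, D.mk_one_mem_rightNucleus t⟩
end

section
/- Let L(Id,f) be an automorphism-free Schreier loop defined on K×G (i.e. Θ_σ = Id for all σ ∈ K). If there exist σ,τ ∈ K such that f(σ,τ) is not contained in the center of G, then the normal subgroup Ḡ = {(ε,t) : t ∈ G} is not left nuclear in L(Id,f). -/
universe u v

def schreierIdMul {K : Type u} {G : Type v} [Mul K] [Group G] (f : K → K → G)
    (p q : K × G) : K × G :=
  (p.1 * q.1, f p.1 q.1 * p.2 * q.2)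

/-- Testing left nuclearity of `(ε,t)` on `x = (σ,e)`, `y = (τ,e)` compares
`f(σ,τ)·t` with `t·f(σ,τ)`. -/
theorem commute_of_left_nuclear {K : Type u} {G : Type v} [MLoop K] [Group G]
    (f : K → K → G) (hf1 : ∀ σ : K, f 1 σ = 1) {t : G}
    (hnuc : ∀ x y : K × G, schreierIdMul f (schreierIdMul f (1, t) x) y =
      schreierIdMul f (1, t) (schreierIdMul f x y))
    (σ τ : K) : Commute t (f σ τ) := by
  have h := congrArg Prod.snd (hnuc (σ, 1) (τ, 1))
  simp only [schreierIdMul, hf1, MLoop.one_mul, one_mul, mul_one] at h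
  exact h.symm

theorem schreier_stmt6_general {K G : Type u} [MLoop K] [Group G]
    (f : K → K → G) (hf1 : ∀ σ : K, f 1 σ = 1)
    (hnc : ∃ σ τ : K, f σ τ ∉ Subgroup.center G) :
    let m : K × G → K × G → K × G :=
      fun p q => (p.1 * q.1, f p.1 q.1 * p.2 * q.2)
    ¬ (∀ t : G, ∀ x y : K × G,
        m (m ((1 : K), t) x) y = m ((1 : K), t) (m x y)) := by
  intro _ hnuc
  obtain ⟨σ, τ, hc⟩ := hnc
  exact hc <| Subgroup.mem_center_iff.2 fun t =>
    (commute_of_left_nuclear f hf1 (hnuc t) σ τ).eq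

/-- in an automorphism-free Schreier loop `L(Id,f)` on `K × G`, if some
value `f(σ,τ)` is not central in `G` then `Ḡ = {(ε,t) : t ∈ G}` is not left nuclear. -/
theorem schreier_stmt6 {K G : Type u} [MLoop K] [Group G]
    (f : K → K → G) (hf1 : ∀ σ : K, f 1 σ = 1) (hf2 : ∀ σ : K, f σ 1 = 1)
    (hnc : ∃ σ τ : K, f σ τ ∉ Subgroup.center G) :
    let m : K × G → K × G → K × G :=
      fun p q => (p.1 * q.1, f p.1 q.1 * p.2 * q.2)
    ¬ (∀ t : G, ∀ x y : K × G,
        m (m ((1 : K), t) x) y = m ((1 : K), t) (m x y)) :=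
  schreier_stmt6_general f hf1 hnc
end

section
/- If a loop L has a Schreier decomposition with respect to a normal subgroup G (i.e. there is a Schreier loop L(Θ,f) on K×G and an isomorphism F : L(Θ,f) → L with F(ε,t) = t for all t ∈ G), then G is middle and right nuclear in L. -/
universe u v

/-!
In the Schreier loop `L(Θ,f)` the subgroup `G` sits as `{ε} × G`, and the normalisation
`f(σ,ε) = f(ε,σ) = e`, `Θ_ε = id` makes multiplication by `(ε,u)` purely a group operation in
the second coordinate: `(τ,t)∘(ε,u) = (τ, t·u)` and `(ε,u)∘(σ,s) = (σ, Θ_σ(u)·s)`.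
Associativity of `G` and multiplicativity of `Θ_σ` then give the middle and right nuclear
identities for `(ε,u)` in `L(Θ,f)`, and a surjective multiplicative map carries them to `L`.
-/

namespace SchreierData

variable {K : Type*} {G : Type*} [MLoop K] [Group G] (D : SchreierData K G)

theorem mul_one_fst_right (τ : K) (t u : G) : D.mul (τ, t) (1, u) = (τ, t * u) := by
  simp [SchreierData.mul, D.f_one_right, D.theta_one, MLoop.mul_one]

theorem mul_one_fst_left (σ : K) (u s : G) : D.mul (1, u) (σ, s) = (σ, D.Θ σ u * s) := by
  simp [SchreierData.mul, D.f_one_left, MLoop.one_mul]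

theorem mul_assoc_one_fst_right (p q : K × G) (u : G) :
    D.mul (D.mul p q) (1, u) = D.mul p (D.mul q (1, u)) := by
  rw [mul_one_fst_right, mul_one_fst_right]
  simp [SchreierData.mul, mul_assoc]

theorem mul_assoc_one_fst_middle (p q : K × G) (u : G) :
    D.mul (D.mul p (1, u)) q = D.mul p (D.mul (1, u) q) := by
  rw [mul_one_fst_right, mul_one_fst_left]
  simp [SchreierData.mul, mul_assoc]

end SchreierData

section Transfer

variable {M L : Type*} [Mul L] (μ : M → M → M) {F : M → L}

theorem mem_rightNucleus_of_surjective (hF : Function.Surjective F)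
    (hmul : ∀ p q, F (μ p q) = F p * F q) {a : M} (ha : ∀ p q, μ (μ p q) a = μ p (μ q a)) :
    F a ∈ rightNucleus L := by
  intro x y
  obtain ⟨p, rfl⟩ := hF x
  obtain ⟨q, rfl⟩ := hF y
  simp only [← hmul, ha]

theorem mem_middleNucleus_of_surjective (hF : Function.Surjective F)
    (hmul : ∀ p q, F (μ p q) = F p * F q) {a : M} (ha : ∀ p q, μ (μ p a) q = μ p (μ a q)) :
    F a ∈ middleNucleus L := by
  intro x y
  obtain ⟨p, rfl⟩ := hF x
  obtain ⟨q, rfl⟩ := hF y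
  simp only [← hmul, ha]

end Transfer

theorem schreier_stmt8_general {L : Type u} [MLoop L] (G : Set L) [Group G]
    (hdec : ∃ (K : Type u) (iK : MLoop K) (D : @SchreierData K (↥G) iK _)
        (F : K × G → L),
      Function.Bijective F ∧ (∀ p q : K × G, F (D.mul p q) = F p * F q) ∧
      ∀ t : G, F (iK.toOne.one, t) = (t : L)) :
    ∀ x ∈ G, x ∈ middleNucleus L ∧ x ∈ rightNucleus L := by
  obtain ⟨K, iK, D, F, hbij, hmul, hone⟩ := hdec
  intro x hx
  have hFx : F (1, ⟨x, hx⟩) = x := hone _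
  rw [← hFx]
  exact ⟨mem_middleNucleus_of_surjective D.mul hbij.2 hmul (D.mul_assoc_one_fst_middle · · _),
    mem_rightNucleus_of_surjective D.mul hbij.2 hmul (D.mul_assoc_one_fst_right · · _)⟩

/-- if a loop `L` has a Schreier decomposition with respect to a normal
subgroup `G` (an isomorphism `F : L(Θ,f) → L` from a Schreier loop on `K × G` with
`F(ε,t) = t` for all `t ∈ G`), then `G` is middle and right nuclear in `L`. -/
theorem schreier_stmt8 {L : Type u} [MLoop L] (G : Set L) [Group G]
    (hGmul : ∀ a b : G, ((a * b : G) : L) = (a : L) * (b : L))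
    (hGone : ((1 : G) : L) = 1)
    (hnorm : IsNormalSubloop G)
    (hdec : ∃ (K : Type u) (iK : MLoop K) (D : @SchreierData K (↥G) iK _)
        (F : K × G → L),
      Function.Bijective F ∧ (∀ p q : K × G, F (D.mul p q) = F p * F q) ∧
      ∀ t : G, F (iK.toOne.one, t) = (t : L)) :
    ∀ x ∈ G, x ∈ middleNucleus L ∧ x ∈ rightNucleus L :=
  schreier_stmt8_general G hdec
end

section
/- If G is a middle and right nuclear normal subgroup of a loop L, then for every x ∈ L the middle inner mapping T_x = ρ_x^{-1} ∘ λ_x maps G bijectively onto G and its restriction T_x|_G : G → G is an automorphism of the group G. -/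
universe u v

/-!
If `f` is a loop homomorphism with kernel `G`, then `f (T_x t) * f x = f x * f t`, so by
cancellation `T_x t ∈ G ↔ t ∈ G`; together with bijectivity of `T_x` on `L` this gives the
bijection of `G`. Multiplicativity is a reassociation:
`(T_x s * T_x t) * x = T_x s * (x * t) = (x * s) * t = x * (s * t)`, using that `T_x t` lies in
the middle nucleus and `t` in the right nucleus, and then `ρ_x` is cancelled.
-/

namespace MLoop

variable {L : Type u} [MLoop L]

theorem mul_left_cancel {x a b : L} (h : x * a = x * b) : a = b :=
  (mul_left_bij x).injective h

theorem mul_right_cancel {x a b : L} (h : a * x = b * x) : a = b :=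
  (mul_right_bij x).injective h

theorem eq_one_of_mul_eq_right {a b : L} (h : a * b = b) : a = 1 :=
  mul_right_cancel (h.trans (one_mul b).symm)

theorem eq_one_of_mul_eq_left {a b : L} (h : a * b = a) : b = 1 :=
  mul_left_cancel (h.trans (mul_one a).symm)

theorem midInner_mul (x t : L) : midInner x t * x = x * t :=
  Function.rightInverse_invFun (mul_right_bij x).surjective (x * t)

theorem midInner_injective (x : L) : Function.Injective (midInner x) := fun a b hab =>
  mul_left_cancel <| by rw [← midInner_mul x a, ← midInner_mul x b, hab]

theorem midInner_ldiv_mul (x s : L) : midInner x (ldiv x (s * x)) = s :=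
  mul_right_cancel <| by rw [midInner_mul, mul_ldiv]

theorem midInner_surjective (x : L) : Function.Surjective (midInner x) := fun s =>
  ⟨ldiv x (s * x), midInner_ldiv_mul x s⟩

theorem map_midInner_eq_one_iff {M : Type v} [MLoop M] {f : L → M}
    (hf : ∀ a b : L, f (a * b) = f a * f b) (x t : L) :
    f (midInner x t) = 1 ↔ f t = 1 := by
  have key : f (midInner x t) * f x = f x * f t := by rw [← hf, midInner_mul, hf]
  constructor
  · intro h
    rw [h, one_mul] at key
    exact eq_one_of_mul_eq_left key.symm
  · intro h
    rw [h, mul_one] at key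
    exact eq_one_of_mul_eq_right key

theorem midInner_mul_of_mem_nucleus {x s t : L} (ht : t ∈ rightNucleus L)
    (hTt : midInner x t ∈ middleNucleus L) :
    midInner x (s * t) = midInner x s * midInner x t :=
  mul_right_cancel <| calc
    midInner x (s * t) * x = x * s * t := by rw [midInner_mul, ht]
    _ = midInner x s * (x * t) := by rw [← midInner_mul x s, ht]
    _ = midInner x s * midInner x t * x := by rw [← midInner_mul x t, hTt]

end MLoop

open MLoop

theorem IsNormalSubloop.midInner_mem_iff {L : Type u} [MLoop L] {N : Set L}
    (hN : IsNormalSubloop N) (x t : L) : midInner x t ∈ N ↔ t ∈ N := by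
  obtain ⟨M, i, f, hf, rfl⟩ := hN
  exact map_midInner_eq_one_iff hf x t

theorem IsNormalSubloop.bijOn_midInner {L : Type u} [MLoop L] {N : Set L}
    (hN : IsNormalSubloop N) (x : L) : Set.BijOn (midInner x) N N := by
  refine ⟨fun t ht => (hN.midInner_mem_iff x t).2 ht, (midInner_injective x).injOn, ?_⟩
  intro s hs
  obtain ⟨t, rfl⟩ := midInner_surjective x s
  exact ⟨t, (hN.midInner_mem_iff x t).1 hs, rfl⟩

theorem schreier_stmt10_general {L : Type u} [MLoop L] (G : Set L)
    (hnorm : IsNormalSubloop G)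
    (hnuc : G ⊆ middleNucleus L ∩ rightNucleus L) :
    ∀ x : L,
      Set.BijOn (MLoop.midInner x) G G ∧
      ∀ s ∈ G, ∀ t ∈ G,
        MLoop.midInner x (s * t) = MLoop.midInner x s * MLoop.midInner x t := by
  intro x
  have hbij := hnorm.bijOn_midInner x
  refine ⟨hbij, fun s _ t ht => ?_⟩
  exact midInner_mul_of_mem_nucleus (hnuc ht).2 (hnuc (hbij.mapsTo ht)).1

/-- if `G` is a middle and right nuclear normal subgroup of a loop `L`,
then for every `x ∈ L` the middle inner mapping `T_x = ρ_x⁻¹ ∘ λ_x` maps `G` bijectively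
onto `G` and its restriction to `G` is an automorphism of the group `G`. -/
theorem schreier_stmt10 {L : Type u} [MLoop L] (G : Set L) [Group G]
    (hGmul : ∀ a b : G, ((a * b : G) : L) = (a : L) * (b : L))
    (hGone : ((1 : G) : L) = 1)
    (hnorm : IsNormalSubloop G)
    (hnuc : G ⊆ middleNucleus L ∩ rightNucleus L) :
    ∀ x : L,
      Set.BijOn (MLoop.midInner x) G G ∧
      ∀ s ∈ G, ∀ t ∈ G,
        MLoop.midInner x (s * t) = MLoop.midInner x s * MLoop.midInner x t :=
  schreier_stmt10_general G hnorm hnuc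
end

section
/- Let G be a middle and right nuclear normal subgroup of a loop L. Then the image of the map x ↦ T_x|_G : L → Aut(G) consists entirely of inner automorphisms of G if and only if there exists a left transversal Σ of L/G that is contained in the commutant C_L(G) = {u ∈ L : u·s = s·u for all s ∈ G}. -/
universe u v

/-!
Since `G` is middle and right nuclear, `T_{xg}(t) = T_x(g t g⁻¹)` for `g, t ∈ G`, and an
element `u` lies in the commutant of `G` exactly when `T_u` fixes `G` pointwise. Hence if
`T_x|_G` is conjugation by `r`, then `x r⁻¹` is a commuting element of the coset `xG`, and
choosing one such element per coset (and `1` for `G` itself) gives the transversal.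
Conversely, if `s = x g` lies in a commuting transversal, then `T_x|_G` is conjugation by `g⁻¹`.
The left cosets partition `L` because `G` is middle and right nuclear.
-/

theorem MLoop.mul_right_cancel_s15 {L : Type u} [MLoop L] {x a b : L} (h : a * x = b * x) :
    a = b :=
  (MLoop.mul_right_bij x).1 h

theorem MLoop.mul_left_cancel_s15 {L : Type u} [MLoop L] {x a b : L} (h : x * a = x * b) :
    a = b :=
  (MLoop.mul_left_bij x).1 h

theorem MLoop.midInner_mul_self {L : Type u} [MLoop L] (x t : L) :
    MLoop.midInner x t * x = x * t :=
  Function.invFun_eq ((MLoop.mul_right_bij x).2 (x * t))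

theorem MLoop.midInner_eq_iff {L : Type u} [MLoop L] {x t z : L} :
    MLoop.midInner x t = z ↔ z * x = x * t :=
  ⟨fun h => h ▸ MLoop.midInner_mul_self x t,
    fun h => MLoop.mul_right_cancel_s15 ((MLoop.midInner_mul_self x t).trans h.symm)⟩

def commutant {L : Type u} [Mul L] (G : Set L) : Set L :=
  {u : L | ∀ g : G, u * (g : L) = (g : L) * u}

theorem mem_commutant_iff_midInner {L : Type u} [MLoop L] {G : Set L} {u : L} :
    u ∈ commutant G ↔ ∀ t : G, MLoop.midInner u t = t :=
  forall_congr' fun t => by rw [MLoop.midInner_eq_iff, eq_comm]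

theorem one_mem_commutant {L : Type u} [MLoop L] (G : Set L) : (1 : L) ∈ commutant G :=
  fun g => by rw [MLoop.one_mul, MLoop.mul_one]

def IsLeftTransversal {L : Type u} [MLoop L] (G S : Set L) : Prop :=
  (1 : L) ∈ S ∧ ∀ x : L, ∃! s : L, s ∈ S ∧ ∃ g : G, s = x * (g : L)

structure IsMiddleRightNuclearSubgroup {L : Type u} [MLoop L] (G : Set L) [Group G] :
    Prop where
  coe_mul : ∀ a b : G, ((a * b : G) : L) = (a : L) * (b : L)
  subset_middleNucleus : G ⊆ middleNucleus L
  subset_rightNucleus : G ⊆ rightNucleus L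

namespace IsMiddleRightNuclearSubgroup

variable {L : Type u} [MLoop L] {G : Set L} [Group G]

theorem coe_one (hG : IsMiddleRightNuclearSubgroup G) : ((1 : G) : L) = 1 :=
  MLoop.mul_left_cancel_s15 (x := ((1 : G) : L)) (by rw [← hG.coe_mul, mul_one, MLoop.mul_one])

theorem mul_coe_mul_assoc (hG : IsMiddleRightNuclearSubgroup G) (g : G) (x y : L) :
    x * (g : L) * y = x * ((g : L) * y) :=
  hG.subset_middleNucleus g.2 x y

theorem mul_mul_coe_assoc (hG : IsMiddleRightNuclearSubgroup G) (g : G) (x y : L) :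
    x * y * (g : L) = x * (y * (g : L)) :=
  hG.subset_rightNucleus g.2 x y

theorem mul_coe_mul_coe_inv (hG : IsMiddleRightNuclearSubgroup G) (x : L) (g : G) :
    x * (g : L) * ((g⁻¹ : G) : L) = x := by
  rw [hG.mul_coe_mul_assoc, ← hG.coe_mul, mul_inv_cancel, hG.coe_one, MLoop.mul_one]

def leftCosetSetoid (hG : IsMiddleRightNuclearSubgroup G) : Setoid L where
  r x y := ∃ g : G, x = y * (g : L)
  iseqv :=
    { refl := fun x => ⟨1, by rw [hG.coe_one, MLoop.mul_one]⟩
      symm := fun ⟨g, h⟩ => ⟨g⁻¹, by rw [h, hG.mul_coe_mul_coe_inv]⟩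
      trans := fun ⟨g, hg⟩ ⟨h, hh⟩ =>
        ⟨h * g, by rw [hg, hh, hG.mul_mul_coe_assoc, ← hG.coe_mul]⟩ }

theorem exists_isLeftTransversal_subset (hG : IsMiddleRightNuclearSubgroup G) {C : Set L}
    (hC1 : (1 : L) ∈ C) (hC : ∀ x : L, ∃ c ∈ C, ∃ g : G, c = x * (g : L)) :
    ∃ S ⊆ C, IsLeftTransversal G S := by
  let s := hG.leftCosetSetoid
  have hrep : ∀ q : Quotient s,
      ∃ c ∈ C, Quotient.mk s c = q ∧ (q = Quotient.mk s 1 → c = 1) := by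
    intro q
    by_cases hq : q = Quotient.mk s 1
    · exact ⟨1, hC1, hq.symm, fun _ => rfl⟩
    · obtain ⟨c, hc, hcq⟩ := hC q.out
      exact ⟨c, hc, (Quotient.sound hcq).trans q.out_eq, fun h => absurd h hq⟩
  choose rep hrepC hrep_mk hrep_one using hrep
  refine ⟨Set.range rep, Set.range_subset_iff.2 hrepC,
    ⟨Quotient.mk s 1, hrep_one _ rfl⟩, fun x => ⟨rep (Quotient.mk s x), ?_, ?_⟩⟩
  · exact ⟨⟨_, rfl⟩, Quotient.exact (hrep_mk _)⟩
  · rintro _ ⟨⟨q, rfl⟩, hqx⟩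
    rw [← hrep_mk q, Quotient.sound hqx]

theorem midInner_mul_coe (hG : IsMiddleRightNuclearSubgroup G) (x : L) (g t : G) :
    MLoop.midInner (x * (g : L)) t = MLoop.midInner x ((g * t * g⁻¹ : G) : L) := by
  rw [MLoop.midInner_eq_iff, ← hG.mul_mul_coe_assoc, MLoop.midInner_mul_self,
    hG.mul_mul_coe_assoc, ← hG.coe_mul, inv_mul_cancel_right, hG.coe_mul, hG.mul_coe_mul_assoc]

theorem exists_isLeftTransversal_subset_commutant (hG : IsMiddleRightNuclearSubgroup G)
    (hinner : ∀ x : L, ∃ r : G, ∀ t : G, MLoop.midInner x t = ((r * t * r⁻¹ : G) : L)) :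
    ∃ S ⊆ commutant G, IsLeftTransversal G S := by
  refine hG.exists_isLeftTransversal_subset (one_mem_commutant G) fun x => ?_
  obtain ⟨r, hr⟩ := hinner x
  refine ⟨x * ((r⁻¹ : G) : L), mem_commutant_iff_midInner.2 fun t => ?_, r⁻¹, rfl⟩
  rw [hG.midInner_mul_coe, hr]
  group

theorem midInner_eq_conj_of_isLeftTransversal (hG : IsMiddleRightNuclearSubgroup G)
    {S : Set L} (hS : IsLeftTransversal G S) (hSC : S ⊆ commutant G) (x : L) :
    ∃ r : G, ∀ t : G, MLoop.midInner x t = ((r * t * r⁻¹ : G) : L) := by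
  obtain ⟨s, ⟨hs, g, hsx⟩, -⟩ := hS.2 x
  obtain ⟨g', hxs⟩ := hG.leftCosetSetoid.symm ⟨g, hsx⟩
  refine ⟨g', fun t => ?_⟩
  rw [hxs, hG.midInner_mul_coe, mem_commutant_iff_midInner.1 (hSC hs)]

end IsMiddleRightNuclearSubgroup

theorem schreier_stmt15_general {L : Type u} [MLoop L] (G : Set L) [Group G]
    (hGmul : ∀ a b : G, ((a * b : G) : L) = (a : L) * (b : L))
    (hnuc : G ⊆ middleNucleus L ∩ rightNucleus L) :
    (∀ x : L, ∃ r : G, ∀ t : G,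
        MLoop.midInner x (t : L) = ((r * t * r⁻¹ : G) : L)) ↔
      (∃ S : Set L, (1 : L) ∈ S ∧
        (∀ x : L, ∃! s : L, s ∈ S ∧ ∃ g : G, s = x * (g : L)) ∧
        S ⊆ {u : L | ∀ g : G, u * (g : L) = (g : L) * u}) := by
  have hG : IsMiddleRightNuclearSubgroup G :=
    ⟨hGmul, fun _ hg => (hnuc hg).1, fun _ hg => (hnuc hg).2⟩
  constructor
  · intro hinner
    obtain ⟨S, hSC, h1, hS⟩ := hG.exists_isLeftTransversal_subset_commutant hinner
    exact ⟨S, h1, hS, hSC⟩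
  · rintro ⟨S, h1, hS, hSC⟩
    exact hG.midInner_eq_conj_of_isLeftTransversal ⟨h1, hS⟩ hSC

/-- for a middle and right nuclear normal subgroup `G` of a loop `L`, every
restricted middle inner mapping `T_x|_G` (`x ∈ L`) is an inner automorphism of `G` iff
there is a left transversal `S` of `L/G` (a set of representatives of the left cosets of
`G` containing the identity) contained in the commutant
`C_L(G) = {u : u·s = s·u for all s ∈ G}`. -/
theorem schreier_stmt15 {L : Type u} [MLoop L] (G : Set L) [Group G]
    (hGmul : ∀ a b : G, ((a * b : G) : L) = (a : L) * (b : L))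
    (hGone : ((1 : G) : L) = 1)
    (hnorm : IsNormalSubloop G)
    (hnuc : G ⊆ middleNucleus L ∩ rightNucleus L) :
    (∀ x : L, ∃ r : G, ∀ t : G,
        MLoop.midInner x (t : L) = ((r * t * r⁻¹ : G) : L)) ↔
      (∃ S : Set L, (1 : L) ∈ S ∧
        (∀ x : L, ∃! s : L, s ∈ S ∧ ∃ g : G, s = x * (g : L)) ∧
        S ⊆ {u : L | ∀ g : G, u * (g : L) = (g : L) * u}) :=
  schreier_stmt15_general G hGmul hnuc
end

section
/- Let G be a middle and right nuclear normal subgroup of a loop L. Then the map x ↦ T_x|_G : L → Aut(G) is a homomorphism (i.e. T_{x·y}|_G = T_x|_G ∘ T_y|_G for all x,y ∈ L) if and only if G is nuclear, i.e. G is also contained in the left nucleus of L. -/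
universe u v

/-!
Write `u = T_x (T_y t)` for `t ∈ G`. Using only that `T_y t` lies in the middle nucleus and `t`
in the right nucleus, `u x y = x (T_y t) y = x ((T_y t) y) = x (y t) = (x y) t`, whereas
`T_{xy} t = u` means `u (x y) = (x y) t`. So `T_{xy} t = T_x (T_y t)` holds exactly when
`(u x) y = u (x y)`. Since `G` is a kernel, each `T_x` maps `G` onto `G`, so as `t` ranges over `G`
the element `u` ranges over all of `G`.
-/

namespace MLoop

variable {L : Type u} [MLoop L]

theorem midInner_eq_iff_s16 {x t z : L} : midInner x t = z ↔ z * x = x * t := by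
  constructor
  · rintro rfl
    exact midInner_mul x t
  · intro h
    apply (mul_right_bij x).injective
    change midInner x t * x = z * x
    rw [midInner_mul, h]

theorem midInner_ldiv (x z : L) : midInner x (ldiv x (z * x)) = z :=
  midInner_eq_iff_s16.mpr (mul_ldiv x (z * x)).symm

theorem midInner_midInner_mul_mul {x y t : L} (ht : t ∈ rightNucleus L)
    (ha : midInner y t ∈ middleNucleus L) :
    midInner x (midInner y t) * x * y = x * y * t :=
  calc midInner x (midInner y t) * x * y
      = x * midInner y t * y := by rw [midInner_mul]
    _ = x * (midInner y t * y) := ha x y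
    _ = x * (y * t) := by rw [midInner_mul]
    _ = x * y * t := (ht x y).symm

theorem midInner_mul_eq_iff {x y t : L} (ht : t ∈ rightNucleus L)
    (ha : midInner y t ∈ middleNucleus L) :
    midInner (x * y) t = midInner x (midInner y t) ↔
      midInner x (midInner y t) * x * y = midInner x (midInner y t) * (x * y) := by
  rw [midInner_eq_iff_s16, midInner_midInner_mul_mul ht ha, eq_comm]

end MLoop

namespace IsNormalSubloop

open MLoop

variable {L : Type u} [MLoop L] {N : Set L}

theorem mem_iff_of_mul_eq (hN : IsNormalSubloop N) {x t z : L} (h : z * x = x * t) :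
    z ∈ N ↔ t ∈ N := by
  obtain ⟨M, i, f, hf, rfl⟩ := hN
  let _ : MLoop M := i
  have hf : ∀ x y : L, f (x * y) = f x * f y := hf
  have hfzt : f z * f x = f x * f t := by rw [← hf, ← hf, h]
  change f z = 1 ↔ f t = 1
  constructor
  · intro hz
    apply (mul_left_bij (f x)).injective
    change f x * f t = f x * 1
    rw [← hfzt, hz, MLoop.one_mul, MLoop.mul_one]
  · intro ht
    apply (mul_right_bij (f x)).injective
    change f z * f x = 1 * f x
    rw [hfzt, ht, MLoop.one_mul, MLoop.mul_one]

theorem midInner_mem (hN : IsNormalSubloop N) (x : L) {t : L} (ht : t ∈ N) :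
    midInner x t ∈ N :=
  (hN.mem_iff_of_mul_eq (midInner_mul x t)).mpr ht

theorem exists_midInner_eq (hN : IsNormalSubloop N) (x : L) {z : L} (hz : z ∈ N) :
    ∃ t ∈ N, midInner x t = z := by
  refine ⟨ldiv x (z * x), ?_, midInner_ldiv x z⟩
  rw [← hN.mem_iff_of_mul_eq (midInner_mul x _), midInner_ldiv]
  exact hz

end IsNormalSubloop

theorem schreier_stmt16_general {L : Type u} [MLoop L] (G : Set L)
    (hnorm : IsNormalSubloop G)
    (hnuc : G ⊆ middleNucleus L ∩ rightNucleus L) :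
    (∀ (x y : L) (t : G),
        MLoop.midInner (x * y) (t : L) = MLoop.midInner x (MLoop.midInner y (t : L))) ↔
      G ⊆ leftNucleus L := by
  constructor
  · intro hhom u hu x y
    obtain ⟨a, ha, rfl⟩ := hnorm.exists_midInner_eq x hu
    obtain ⟨t, ht, rfl⟩ := hnorm.exists_midInner_eq y ha
    exact (MLoop.midInner_mul_eq_iff (hnuc ht).2 (hnuc ha).1).mp (hhom x y ⟨t, ht⟩)
  · intro hleft x y t
    have ha := hnorm.midInner_mem y t.2
    exact (MLoop.midInner_mul_eq_iff (hnuc t.2).2 (hnuc ha).1).mpr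
      (hleft (hnorm.midInner_mem x ha) x y)

/-- for a middle and right nuclear normal subgroup `G` of a loop `L`, the
map `x ↦ T_x|_G : L → Aut(G)` is a homomorphism (`T_{x·y}|_G = T_x|_G ∘ T_y|_G`) iff `G`
is nuclear, i.e. `G` is also contained in the left nucleus of `L`. -/
theorem schreier_stmt16 {L : Type u} [MLoop L] (G : Set L) [Group G]
    (hGmul : ∀ a b : G, ((a * b : G) : L) = (a : L) * (b : L))
    (hGone : ((1 : G) : L) = 1)
    (hnorm : IsNormalSubloop G)
    (hnuc : G ⊆ middleNucleus L ∩ rightNucleus L) :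
    (∀ (x y : L) (t : G),
        MLoop.midInner (x * y) (t : L) = MLoop.midInner x (MLoop.midInner y (t : L))) ↔
      G ⊆ leftNucleus L :=
  schreier_stmt16_general G hnorm hnuc
end
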